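/- Discrete Hadamard variational formula: for all vertices x,y, G_n(x,y)/π(y) = Σ_{ξ∈V(Γ_n)} K_{t(ξ)}(x,ξ) K_{t(ξ)}(y,ξ), where t(ξ) is the unique m with ξ∈V(γ_m), K_m(y,ξ) = Σ_{η∈V(γ_m)} P_m(y,η) R̃_m(η,ξ) for ξ∈V(γ_m), and R̃_m is the kernel of the positive semidefinite square root of the boundary normalized Green operator G̃^⟨m⟩ on ℓ²(V(γ_m)). -/

import Mathlib

open scoped BigOperators
open MeasureTheory ProbabilityTheory

attribute [local instance] Classical.propDecidable

noncomputable section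

/-- A connected, locally finite graph with a positive symmetric conductance. -/
structure WeightedGraph (V : Type) where
  adj : V → V → Prop
  symm : ∀ {x y}, adj x y → adj y x
  irrefl : ∀ x, ¬ adj x x
  locFin : ∀ x, {y | adj x y}.Finite
  connected : ∀ x y, Relation.ReflTransGen adj x y
  c : V → V → ℝ
  c_pos : ∀ {x y}, adj x y → 0 < c x y
  c_symm : ∀ x y, c x y = c y x
  c_eq_zero : ∀ {x y}, ¬ adj x y → c x y = 0

variable {V : Type}

/-- Weighted coboundary operator: `(df)(x,y) = √c(x,y) (f x - f y)`. -/
noncomputable def dd (G : WeightedGraph V) (f : V → ℝ) : V × V → ℝ :=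
  fun e => Real.sqrt (G.c e.1 e.2) * (f e.1 - f e.2)

/-- Weighted boundary operator: `(d*φ)(x) = Σ_{e : e⁻ = x} √c(e) φ(e)`. -/
noncomputable def dstar (G : WeightedGraph V) (φ : V × V → ℝ) : V → ℝ :=
  fun x => ∑ᶠ y ∈ {y | G.adj x y}, Real.sqrt (G.c x y) * φ (x, y)

/-- The weighted graph Laplacian `d*d`. -/
noncomputable def lap (G : WeightedGraph V) (f : V → ℝ) : V → ℝ :=
  fun x => ∑ᶠ y ∈ {y | G.adj x y}, G.c x y * (f x - f y)

/-- Stationary distribution `π(x) = Σ_{y ∼ x} c(x,y)`. -/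
noncomputable def piw (G : WeightedGraph V) (x : V) : ℝ :=
  ∑ᶠ y ∈ {y | G.adj x y}, G.c x y

/-- `E_U`: edges with at least one endpoint in `U`. -/
def edgesOf (G : WeightedGraph V) (U : Set V) : Set (V × V) :=
  {e | G.adj e.1 e.2 ∧ (e.1 ∈ U ∨ e.2 ∈ U)}

/-- Dirichlet (energy) inner product `⟨f,g⟩_{∇,U} = (1/2) Σ_{e ∈ E_U} df(e) dg(e)`. -/
noncomputable def dirInner (G : WeightedGraph V) (U : Set V) (f g : V → ℝ) : ℝ :=
  (1/2) * ∑ᶠ e ∈ edgesOf G U, dd G f e * dd G g e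

/-- `ℓ²(U)` inner product `⟨f,g⟩_U = Σ_{x ∈ U} f x * g x`. -/
noncomputable def l2Inner (U : Set V) (f g : V → ℝ) : ℝ := ∑ᶠ x ∈ U, f x * g x

/-- Dirichlet Laplacian `Δ_U f = 1_U · d*d f`. -/
noncomputable def dirLap (G : WeightedGraph V) (U : Set V) (f : V → ℝ) : V → ℝ :=
  fun x => if x ∈ U then lap G f x else 0

/-- `GU` is the discrete Green function of `U`:
`d*d G_U(·,y) = π(y) δ_y` on `U`, vanishing off `U`, and `G_U(·,y) = 0` for `y ∉ U`. -/
def IsGreen (G : WeightedGraph V) (U : Set V) (GU : V → V → ℝ) : Prop :=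
  (∀ y, y ∉ U → ∀ x, GU x y = 0) ∧
  (∀ y ∈ U, (∀ x, x ∉ U → GU x y = 0) ∧
    ∀ x ∈ U, lap G (fun z => GU z y) x = piw G y * (if x = y then 1 else 0))

/-- `P` is the discrete Poisson kernel of `U` relative to `W ⊂ U`:
`P(·,ξ)` is harmonic on `U \ W`, equals `δ_ξ` on `W`, vanishes off `U`. -/
def IsPoisson (G : WeightedGraph V) (U W : Set V) (P : V → V → ℝ) : Prop :=
  ∀ ξ ∈ W, (∀ x ∈ U \ W, lap G (fun z => P z ξ) x = 0) ∧
    (∀ x ∈ W, P x ξ = (if x = ξ then 1 else 0)) ∧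
    (∀ x, x ∉ U → P x ξ = 0)

/-- A discrete foliation of the weighted graph `G`, given by its layers of vertices. -/
structure DiscreteFoliation (G : WeightedGraph V) where
  layer : ℕ → Set V
  layer_nonempty : ∀ n, (layer n).Nonempty
  layer_finite : ∀ n, (layer n).Finite
  layer_disjoint : ∀ m n, m ≠ n → Disjoint (layer m) (layer n)
  layer_cover : ∀ x, ∃ n, x ∈ layer n
  adj_zero : ∀ x ∈ layer 0, ∀ y, G.adj x y → y ∈ layer 0 ∪ layer 1
  adj_succ : ∀ n, ∀ x ∈ layer (n + 1), ∀ y, G.adj x y →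
    y ∈ layer n ∪ layer (n + 1) ∪ layer (n + 2)

/-- The growth cluster `Γ_n`: union of the layers `γ_0, …, γ_n`. -/
def cluster {G : WeightedGraph V} (F : DiscreteFoliation G) (n : ℕ) : Set V :=
  ⋃ k ≤ n, F.layer k

/-- `R m` is the symmetric positive semidefinite square-root kernel of the
boundary normalized Green operator `G̃^⟨m⟩` on `ℓ²(V(γ_m))`. -/
def IsSqrtBoundaryGreen {G : WeightedGraph V} (F : DiscreteFoliation G)
    (Gm : V → V → ℝ) (m : ℕ) (R : V → V → ℝ) : Prop :=
  (∀ x y, x ∈ F.layer m → y ∈ F.layer m → R x y = R y x) ∧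
  (∀ x y, x ∉ F.layer m ∨ y ∉ F.layer m → R x y = 0) ∧
  (∀ f : V → ℝ, Function.support f ⊆ F.layer m →
    0 ≤ ∑ᶠ x ∈ F.layer m, (∑ᶠ y ∈ F.layer m, R x y * f y) * f x) ∧
  (∀ x ∈ F.layer m, ∀ y ∈ F.layer m,
    ∑ᶠ σ ∈ F.layer m, R x σ * R σ y = Gm x y / piw G y)

/-- The Hadamard kernel `K_m(x,ξ) = Σ_{η ∈ γ_m} P_m(x,η) R̃_m(η,ξ)`. -/
noncomputable def hadK {G : WeightedGraph V} (F : DiscreteFoliation G)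
    (P R : ℕ → V → V → ℝ) (m : ℕ) (x ξ : V) : ℝ :=
  ∑ᶠ η ∈ F.layer m, P m x η * R m η ξ

/-- The Hadamard operator `Q_n f (x) = Σ_{y ∈ V(Γ_n)} K_{t(y)}(x,y) f(y)`. -/
noncomputable def hadQ {G : WeightedGraph V} (F : DiscreteFoliation G)
    (P R : ℕ → V → V → ℝ) (t : V → ℕ) (n : ℕ) (f : V → ℝ) : V → ℝ :=
  fun x => ∑ᶠ y ∈ cluster F n, hadK F P R (t y) x y * f y

/-- The adjoint Hadamard operator `Q_n* f (x) = Σ_{y ∈ V(Γ_n)} K_{t(x)}(y,x) f(y)`. -/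
noncomputable def hadQstar {G : WeightedGraph V} (F : DiscreteFoliation G)
    (P R : ℕ → V → V → ℝ) (t : V → ℕ) (n : ℕ) (f : V → ℝ) : V → ℝ :=
  fun x => ∑ᶠ y ∈ cluster F n, hadK F P R (t x) y x * f y
section Aux

variable {V : Type}

/-- The neighbor finset of a vertex. -/
noncomputable def nbr (G : WeightedGraph V) (x : V) : Finset V := (G.locFin x).toFinset

lemma mem_nbr {G : WeightedGraph V} {x y : V} : y ∈ nbr G x ↔ G.adj x y := by
  simp [nbr, Set.Finite.mem_toFinset]

lemma lap_eq (G : WeightedGraph V) (f : V → ℝ) (x : V) :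
    lap G f x = ∑ y ∈ nbr G x, G.c x y * (f x - f y) := by
  rw [lap, finsum_mem_eq_finite_toFinset_sum _ (G.locFin x)]; rfl

lemma piw_eq (G : WeightedGraph V) (x : V) :
    piw G x = ∑ y ∈ nbr G x, G.c x y := by
  rw [piw, finsum_mem_eq_finite_toFinset_sum _ (G.locFin x)]; rfl

lemma lap_sub (G : WeightedGraph V) (f g : V → ℝ) (x : V) :
    lap G (fun z => f z - g z) x = lap G f x - lap G g x := by
  rw [lap_eq, lap_eq, lap_eq, ← Finset.sum_sub_distrib]
  exact Finset.sum_congr rfl (fun y _ => by ring)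

lemma lap_neg (G : WeightedGraph V) (f : V → ℝ) (x : V) :
    lap G (fun z => -f z) x = -lap G f x := by
  rw [lap_eq, lap_eq, ← Finset.sum_neg_distrib]
  exact Finset.sum_congr rfl (fun y _ => by ring)

lemma lap_finset_sum {ι : Type} (G : WeightedGraph V) (s : Finset ι) (g : ι → V → ℝ) (x : V) :
    lap G (fun z => ∑ i ∈ s, g i z) x = ∑ i ∈ s, lap G (g i) x := by
  simp only [lap_eq]
  have h : ∀ y ∈ nbr G x, G.c x y * (∑ i ∈ s, g i x - ∑ i ∈ s, g i y)
      = ∑ i ∈ s, G.c x y * (g i x - g i y) := by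
    intro y _; rw [← Finset.sum_sub_distrib, Finset.mul_sum]
  rw [Finset.sum_congr rfl h, Finset.sum_comm]

lemma lap_mul_const (G : WeightedGraph V) (f : V → ℝ) (a : ℝ) (x : V) :
    lap G (fun z => f z * a) x = lap G f x * a := by
  rw [lap_eq, lap_eq, Finset.sum_mul]
  exact Finset.sum_congr rfl (fun y _ => by ring)

/-! ### Foliation basics -/

variable {G : WeightedGraph V}

lemma mem_cluster {F : DiscreteFoliation G} {n : ℕ} {x : V} :
    x ∈ cluster F n ↔ ∃ k ≤ n, x ∈ F.layer k := by
  simp [cluster]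

lemma cluster_finite (F : DiscreteFoliation G) (n : ℕ) : (cluster F n).Finite := by
  have : cluster F n = ⋃ k ∈ Set.Iic n, F.layer k := by
    ext z; simp [cluster, Set.mem_Iic]
  rw [this]
  exact Set.Finite.biUnion (Set.finite_Iic n) (fun k _ => F.layer_finite k)

lemma layer_subset_cluster (F : DiscreteFoliation G) {m n : ℕ} (h : m ≤ n) :
    F.layer m ⊆ cluster F n := fun x hx => mem_cluster.mpr ⟨m, h, hx⟩

lemma cluster_mono (F : DiscreteFoliation G) {m n : ℕ} (h : m ≤ n) :
    cluster F m ⊆ cluster F n := by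
  intro x hx
  obtain ⟨k, hk, hkx⟩ := mem_cluster.mp hx
  exact mem_cluster.mpr ⟨k, le_trans hk h, hkx⟩

lemma cluster_zero (F : DiscreteFoliation G) : cluster F 0 = F.layer 0 := by
  ext x
  rw [mem_cluster]
  constructor
  · rintro ⟨k, hk, hkx⟩; rwa [Nat.le_zero.mp hk] at hkx
  · intro hx; exact ⟨0, le_refl 0, hx⟩

lemma cluster_succ (F : DiscreteFoliation G) (n : ℕ) :
    cluster F (n + 1) = cluster F n ∪ F.layer (n + 1) := by
  ext x
  rw [Set.mem_union, mem_cluster, mem_cluster]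
  constructor
  · rintro ⟨k, hk, hkx⟩
    rcases Nat.lt_or_ge k (n + 1) with h | h
    · exact Or.inl ⟨k, Nat.lt_succ_iff.mp h, hkx⟩
    · right; rwa [le_antisymm hk h] at hkx
  · rintro (⟨k, hk, hkx⟩ | hx)
    · exact ⟨k, le_trans hk (Nat.le_succ n), hkx⟩
    · exact ⟨n + 1, le_refl _, hx⟩

lemma not_mem_cluster_of_layer (F : DiscreteFoliation G) {n m : ℕ} (h : n < m) {x : V}
    (hx : x ∈ F.layer m) : x ∉ cluster F n := by
  intro hc
  obtain ⟨k, hk, hkx⟩ := mem_cluster.mp hc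
  exact Set.disjoint_left.mp (F.layer_disjoint k m (by omega)) hkx hx

lemma t_eq (F : DiscreteFoliation G) {t : V → ℕ} (ht : ∀ ξ, ξ ∈ F.layer (t ξ))
    {m : ℕ} {ξ : V} (hξ : ξ ∈ F.layer m) : t ξ = m := by
  by_contra h
  exact Set.disjoint_left.mp (F.layer_disjoint (t ξ) m h) (ht ξ) hξ

lemma exists_adj (F : DiscreteFoliation G) (x : V) : ∃ y, G.adj x y := by
  obtain ⟨k, hk⟩ := F.layer_cover x
  obtain ⟨z, hz⟩ := F.layer_nonempty (k + 1)
  have hxz : x ≠ z := by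
    intro h
    exact Set.disjoint_left.mp (F.layer_disjoint k (k + 1) (by omega)) hk (h ▸ hz)
  rcases Relation.ReflTransGen.cases_head (G.connected x z) with h | ⟨y, hy, _⟩
  · exact absurd h hxz
  · exact ⟨y, hy⟩

lemma piw_pos (F : DiscreteFoliation G) (x : V) : 0 < piw G x := by
  obtain ⟨y, hy⟩ := exists_adj F x
  rw [piw_eq]
  exact Finset.sum_pos' (fun z hz => (G.c_pos (mem_nbr.mp hz)).le)
    ⟨y, mem_nbr.mpr hy, G.c_pos hy⟩

end Aux
section Aux2

variable {V : Type} {G : WeightedGraph V}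

/-- Green functions vanish when either argument is outside `U`. -/
lemma green_vanish {U : Set V} {GU : V → V → ℝ} (hG : IsGreen G U GU) {z y : V}
    (h : z ∉ U ∨ y ∉ U) : GU z y = 0 := by
  rcases h with h | h
  · by_cases hy : y ∈ U
    · exact (hG.2 y hy).1 z h
    · exact hG.1 y hy z
  · exact hG.1 y h z

/-- Summation by parts: symmetry of the Dirichlet bilinear form. -/
lemma sum_parts (F : DiscreteFoliation G) (m : ℕ) (f g : V → ℝ)
    (hf : ∀ x, x ∉ cluster F m → f x = 0) (hg : ∀ x, x ∉ cluster F m → g x = 0) :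
    ∑ x ∈ (cluster_finite F m).toFinset, f x * lap G g x
      = ∑ x ∈ (cluster_finite F m).toFinset, g x * lap G f x := by
  classical
  set C : Finset V := (cluster_finite F m).toFinset with hCdef
  have hmemC : ∀ x : V, x ∈ C ↔ x ∈ cluster F m := by
    intro x; simp [hCdef, Set.Finite.mem_toFinset]
  set W : Finset V := C ∪ C.biUnion (nbr G) with hWdef
  have hCW : C ⊆ W := Finset.subset_union_left
  have hnbrW : ∀ x ∈ C, nbr G x ⊆ W := by
    intro x hx y hy
    exact Finset.mem_union_right _ (Finset.mem_biUnion.mpr ⟨x, hx, hy⟩)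
  -- expand to the big double sum
  have expand : ∀ u v : V → ℝ, (∀ x, x ∉ cluster F m → u x = 0) →
      ∑ x ∈ C, u x * lap G v x
        = ∑ x ∈ W, ∑ y ∈ W, (if G.adj x y then G.c x y * u x * (v x - v y) else 0) := by
    intro u v hu
    rw [Finset.sum_subset hCW (fun x _ hx => by
      rw [hu x (fun hc => hx ((hmemC x).mpr hc))]; ring)]
    refine Finset.sum_congr rfl (fun x hx => ?_)
    by_cases hux : u x = 0
    · rw [hux, zero_mul]
      exact (Finset.sum_eq_zero (fun y _ => by
        split
        · ring
        · rfl)).symm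
    · have hxC : x ∈ C := (hmemC x).mpr (by
        by_contra h; exact hux (hu x h))
      rw [lap_eq, Finset.mul_sum]
      rw [← Finset.sum_filter (fun y => G.adj x y)
        (fun y => G.c x y * u x * (v x - v y))]
      have hfilt : W.filter (fun y => G.adj x y) = nbr G x := by
        ext y
        simp only [Finset.mem_filter, mem_nbr]
        exact ⟨fun h => h.2, fun h => ⟨hnbrW x hxC (mem_nbr.mpr h), h⟩⟩
      rw [hfilt]
      exact Finset.sum_congr rfl (fun y _ => by ring)
  rw [expand f g hf, expand g f hg]
  -- split each double sum into a diagonal and an off-diagonal part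
  have split : ∀ u v : V → ℝ,
      (∑ x ∈ W, ∑ y ∈ W, (if G.adj x y then G.c x y * u x * (v x - v y) else 0))
        = (∑ x ∈ W, ∑ y ∈ W, (if G.adj x y then G.c x y * u x * v x else 0))
          - ∑ x ∈ W, ∑ y ∈ W, (if G.adj x y then G.c x y * u x * v y else 0) := by
    intro u v
    rw [← Finset.sum_sub_distrib]
    refine Finset.sum_congr rfl (fun x _ => ?_)
    rw [← Finset.sum_sub_distrib]
    refine Finset.sum_congr rfl (fun y _ => ?_)
    split
    · ring
    · ring
  rw [split f g, split g f]
  have swap : ∀ u v : V → ℝ,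
      (∑ x ∈ W, ∑ y ∈ W, (if G.adj x y then G.c x y * u x * v y else 0))
        = ∑ x ∈ W, ∑ y ∈ W, (if G.adj x y then G.c x y * v x * u y else 0) := by
    intro u v
    rw [Finset.sum_comm]
    refine Finset.sum_congr rfl (fun x _ => Finset.sum_congr rfl (fun y _ => ?_))
    by_cases h : G.adj x y
    · rw [if_pos h, if_pos (G.symm h), G.c_symm y x]; ring
    · rw [if_neg h, if_neg (fun h' => h (G.symm h'))]
  have diag : (∑ x ∈ W, ∑ y ∈ W, (if G.adj x y then G.c x y * f x * g x else 0))
      = ∑ x ∈ W, ∑ y ∈ W, (if G.adj x y then G.c x y * g x * f x else 0) := by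
    refine Finset.sum_congr rfl (fun x _ => Finset.sum_congr rfl (fun y _ => ?_))
    split
    · ring
    · rfl
  rw [diag, swap f g]

/-- Symmetry of the Green function. -/
lemma green_symm (F : DiscreteFoliation G) {m : ℕ} {Gm : V → V → ℝ}
    (hG : IsGreen G (cluster F m) Gm) (x y : V) :
    Gm x y * piw G x = Gm y x * piw G y := by
  classical
  by_cases hx : x ∈ cluster F m
  · by_cases hy : y ∈ cluster F m
    · have hf : ∀ z, z ∉ cluster F m → Gm z y = 0 := fun z hz => (hG.2 y hy).1 z hz
      have hg : ∀ z, z ∉ cluster F m → Gm z x = 0 := fun z hz => (hG.2 x hx).1 z hz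
      have hsp := sum_parts F m (fun z => Gm z y) (fun z => Gm z x) hf hg
      have hmemC : ∀ z : V, z ∈ (cluster_finite F m).toFinset ↔ z ∈ cluster F m := by
        intro z; simp [Set.Finite.mem_toFinset]
      have h1 : ∑ z ∈ (cluster_finite F m).toFinset, Gm z y * lap G (fun w => Gm w x) z
          = Gm x y * piw G x := by
        have hcong : ∀ z ∈ (cluster_finite F m).toFinset,
            Gm z y * lap G (fun w => Gm w x) z
              = if z = x then Gm z y * piw G x else 0 := by
          intro z hz
          rw [(hG.2 x hx).2 z ((hmemC z).mp hz)]
          split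
          · ring
          · simp
        rw [Finset.sum_congr rfl hcong, Finset.sum_ite_eq' _ x (fun z => Gm z y * piw G x),
          if_pos ((hmemC x).mpr hx)]
      have h2 : ∑ z ∈ (cluster_finite F m).toFinset, Gm z x * lap G (fun w => Gm w y) z
          = Gm y x * piw G y := by
        have hcong : ∀ z ∈ (cluster_finite F m).toFinset,
            Gm z x * lap G (fun w => Gm w y) z
              = if z = y then Gm z x * piw G y else 0 := by
          intro z hz
          rw [(hG.2 y hy).2 z ((hmemC z).mp hz)]
          split
          · ring
          · simp
        rw [Finset.sum_congr rfl hcong, Finset.sum_ite_eq' _ y (fun z => Gm z x * piw G y),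
          if_pos ((hmemC y).mpr hy)]
      rw [← h1, ← h2, hsp]
    · rw [green_vanish hG (Or.inr hy), green_vanish hG (Or.inl hy)]; ring
  · rw [green_vanish hG (Or.inl hx), green_vanish hG (Or.inr hx)]; ring

lemma green_symm_div (F : DiscreteFoliation G) {m : ℕ} {Gm : V → V → ℝ}
    (hG : IsGreen G (cluster F m) Gm) (x y : V) :
    Gm x y / piw G y = Gm y x / piw G x := by
  rw [div_eq_div_iff (piw_pos F y).ne' (piw_pos F x).ne']
  exact green_symm F hG x y

end Aux2
section Aux3

variable {V : Type} {G : WeightedGraph V}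

lemma below_zero (F : DiscreteFoliation G) (m : ℕ) (u : V → ℝ)
    (hsupp : ∀ x, x ∉ cluster F m → u x = 0)
    (hharm : ∀ x ∈ cluster F m, x ∉ F.layer m → lap G u x = 0)
    (hbd : ∀ x ∈ F.layer m, u x = 0) :
    ∀ x, u x ≤ 0 := by
  classical
  by_contra hcon
  push_neg at hcon
  obtain ⟨z, hz⟩ := hcon
  set C : Finset V := (cluster_finite F m).toFinset with hCdef
  have hmemC : ∀ x : V, x ∈ C ↔ x ∈ cluster F m := by
    intro x; simp [hCdef, Set.Finite.mem_toFinset]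
  obtain ⟨w0, hw0⟩ := F.layer_nonempty 0
  have hCne : C.Nonempty := ⟨w0, (hmemC w0).mpr (layer_subset_cluster F (Nat.zero_le m) hw0)⟩
  set M := C.sup' hCne u with hMdef
  have hzC : z ∈ C := by
    refine (hmemC z).mpr ?_
    by_contra h
    rw [hsupp z h] at hz
    exact lt_irrefl 0 hz
  have hle : ∀ w, u w ≤ M := by
    intro w
    by_cases hw : w ∈ cluster F m
    · exact Finset.le_sup' u ((hmemC w).mpr hw)
    · rw [hsupp w hw]
      exact le_trans hz.le (Finset.le_sup' u hzC)
  have hMpos : 0 < M := lt_of_lt_of_le hz (hle z)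
  obtain ⟨x0, _, hx0⟩ := Finset.exists_mem_eq_sup' hCne u
  have key : ∀ w, u w = M → ∀ y, G.adj w y → u y = M := by
    intro w hw y hy
    have hwC : w ∈ cluster F m := by
      by_contra h
      rw [hsupp w h] at hw
      exact absurd hw.symm (ne_of_gt hMpos)
    have hwL : w ∉ F.layer m := by
      intro h
      rw [hbd w h] at hw
      exact absurd hw.symm (ne_of_gt hMpos)
    have hlap := hharm w hwC hwL
    rw [lap_eq] at hlap
    have hnn : ∀ v ∈ nbr G w, 0 ≤ G.c w v * (u w - u v) := fun v hv =>
      mul_nonneg (G.c_pos (mem_nbr.mp hv)).le (by rw [hw]; linarith [hle v])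
    have h0 := (Finset.sum_eq_zero_iff_of_nonneg hnn).mp hlap y (mem_nbr.mpr hy)
    rcases mul_eq_zero.mp h0 with h | h
    · exact absurd h (ne_of_gt (G.c_pos hy))
    · rw [hw] at h; linarith
  have hall : ∀ w, Relation.ReflTransGen G.adj x0 w → u w = M := by
    intro w h
    induction h with
    | refl => exact hx0.symm
    | tail _ hadj ih => exact key _ ih _ hadj
  obtain ⟨z1, hz1⟩ := F.layer_nonempty (m + 1)
  have hz1c : z1 ∉ cluster F m := not_mem_cluster_of_layer F (Nat.lt_succ_self m) hz1
  have := hall z1 (G.connected x0 z1)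
  rw [hsupp z1 hz1c] at this
  exact absurd this.symm (ne_of_gt hMpos)

lemma dirichlet_zero (F : DiscreteFoliation G) (m : ℕ) (u : V → ℝ)
    (hsupp : ∀ x, x ∉ cluster F m → u x = 0)
    (hharm : ∀ x ∈ cluster F m, x ∉ F.layer m → lap G u x = 0)
    (hbd : ∀ x ∈ F.layer m, u x = 0) :
    ∀ x, u x = 0 := by
  have h1 := below_zero F m u hsupp hharm hbd
  have h2 := below_zero F m (fun z => -u z)
    (fun x hx => by show -u x = 0; rw [hsupp x hx]; ring)
    (fun x hx hx' => by rw [lap_neg, hharm x hx hx']; ring)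
    (fun x hx => by show -u x = 0; rw [hbd x hx]; ring)
  intro x
  have := h2 x
  simp only [neg_nonpos] at this
  exact le_antisymm (h1 x) (by linarith)

/-- Poisson representation of functions harmonic off the top layer. -/
lemma poisson_rep (F : DiscreteFoliation G) (m : ℕ) {P : V → V → ℝ}
    (hP : IsPoisson G (cluster F m) (F.layer m) P) (v : V → ℝ)
    (hsupp : ∀ x, x ∉ cluster F m → v x = 0)
    (hharm : ∀ x ∈ cluster F m, x ∉ F.layer m → lap G v x = 0) :
    ∀ x, v x = ∑ η ∈ (F.layer_finite m).toFinset, P x η * v η := by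
  classical
  set L : Finset V := (F.layer_finite m).toFinset with hLdef
  have hmemL : ∀ x : V, x ∈ L ↔ x ∈ F.layer m := by
    intro x; simp [hLdef, Set.Finite.mem_toFinset]
  set w : V → ℝ := fun x => ∑ η ∈ L, P x η * v η with hwdef
  have hz := dirichlet_zero F m (fun z => v z - w z) ?_ ?_ ?_
  · intro x
    have := hz x
    have : v x = w x := by linarith
    exact this
  · intro x hx
    have hw : w x = 0 := Finset.sum_eq_zero (fun η hη => by
      rw [(hP η ((hmemL η).mp hη)).2.2 x hx, zero_mul])
    show v x - w x = 0
    rw [hsupp x hx, hw]; ring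
  · intro x hx hx'
    rw [lap_sub G v w]
    have hlw : lap G w x = 0 := by
      have : lap G w x = ∑ η ∈ L, lap G (fun z => P z η) x * v η := by
        rw [hwdef]
        rw [lap_finset_sum G L (fun η z => P z η * v η) x]
        exact Finset.sum_congr rfl (fun η _ => lap_mul_const G (fun z => P z η) (v η) x)
      rw [this]
      exact Finset.sum_eq_zero (fun η hη => by
        rw [(hP η ((hmemL η).mp hη)).1 x (Set.mem_diff_of_mem hx hx'), zero_mul])
    rw [hlw, hharm x hx hx']; ring
  · intro x hx
    have hw : w x = v x := by
      show ∑ η ∈ L, P x η * v η = v x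
      have hcong : ∀ η ∈ L, P x η * v η = if x = η then v η else 0 := by
        intro η hη
        rw [(hP η ((hmemL η).mp hη)).2.1 x hx]
        split
        · ring
        · ring
      rw [Finset.sum_congr rfl hcong, Finset.sum_ite_eq _ x v, if_pos ((hmemL x).mpr hx)]
    show v x - w x = 0
    rw [hw]; ring

end Aux3
section Aux4

variable {V : Type} {G : WeightedGraph V}

lemma hadK_eq (F : DiscreteFoliation G) (P R : ℕ → V → V → ℝ) (m : ℕ) (x ξ : V) :
    hadK F P R m x ξ = ∑ η ∈ (F.layer_finite m).toFinset, P m x η * R m η ξ := by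
  rw [hadK, finsum_mem_eq_finite_toFinset_sum _ (F.layer_finite m)]

lemma green_increment (F : DiscreteFoliation G)
    {Gm : ℕ → V → V → ℝ} (hGm : ∀ m, IsGreen G (cluster F m) (Gm m))
    {P : ℕ → V → V → ℝ} (hP : ∀ m, IsPoisson G (cluster F m) (F.layer m) (P m))
    (m : ℕ) (x y : V) :
    Gm (m + 1) x y - Gm m x y
      = ∑ η ∈ (F.layer_finite (m + 1)).toFinset, P (m + 1) x η * Gm (m + 1) η y := by
  classical
  have hmemL : ∀ z : V, z ∈ (F.layer_finite (m + 1)).toFinset ↔ z ∈ F.layer (m + 1) := by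
    intro z; simp [Set.Finite.mem_toFinset]
  by_cases hy : y ∈ cluster F (m + 1)
  · -- Gm m η y = 0 for η in layer (m+1)
    have hGm0 : ∀ η ∈ F.layer (m + 1), Gm m η y = 0 := by
      intro η hη
      exact green_vanish (hGm m) (Or.inl (not_mem_cluster_of_layer F (Nat.lt_succ_self m) hη))
    have hrep := poisson_rep F (m + 1) (hP (m + 1)) (fun z => Gm (m + 1) z y - Gm m z y) ?_ ?_
    · have := hrep x
      rw [this]
      refine Finset.sum_congr rfl (fun η hη => ?_)
      rw [hGm0 η ((hmemL η).mp hη)]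
      ring
    · intro z hz
      show Gm (m + 1) z y - Gm m z y = 0
      rw [green_vanish (hGm (m + 1)) (Or.inl hz),
        green_vanish (hGm m) (Or.inl (fun h => hz (cluster_mono F (Nat.le_succ m) h)))]
      ring
    · intro z hz hz'
      have hzc : z ∈ cluster F m := by
        rcases (cluster_succ F m ▸ hz : z ∈ cluster F m ∪ F.layer (m + 1)) with h | h
        · exact h
        · exact absurd h hz'
      rw [lap_sub]
      have h1 : lap G (fun w => Gm (m + 1) w y) z = piw G y * (if z = y then 1 else 0) :=
        ((hGm (m + 1)).2 y hy).2 z hz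
      by_cases hyc : y ∈ cluster F m
      · have h2 : lap G (fun w => Gm m w y) z = piw G y * (if z = y then 1 else 0) :=
          ((hGm m).2 y hyc).2 z hzc
        rw [h1, h2]; ring
      · -- y ∈ layer (m+1), so z ≠ y and Gm m (·, y) ≡ 0
        have hzy : z ≠ y := by
          intro h; exact hyc (h ▸ hzc)
        have h2 : lap G (fun w => Gm m w y) z = 0 := by
          have hzero : (fun w => Gm m w y) = fun _ => (0 : ℝ) := by
            funext w; exact green_vanish (hGm m) (Or.inr hyc)
          rw [hzero, lap_eq]
          exact Finset.sum_eq_zero (fun v _ => by ring)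
        rw [h1, h2, if_neg hzy]; ring
  · rw [green_vanish (hGm (m + 1)) (Or.inr hy),
      green_vanish (hGm m) (Or.inr (fun h => hy (cluster_mono F (Nat.le_succ m) h)))]
    rw [Finset.sum_eq_zero (fun η _ => by
      rw [green_vanish (hGm (m + 1)) (Or.inr hy), mul_zero])]
    ring

lemma increment (F : DiscreteFoliation G)
    {Gm : ℕ → V → V → ℝ} (hGm : ∀ m, IsGreen G (cluster F m) (Gm m))
    {P : ℕ → V → V → ℝ} (hP : ∀ m, IsPoisson G (cluster F m) (F.layer m) (P m))
    {R : ℕ → V → V → ℝ} (hR : ∀ m, IsSqrtBoundaryGreen F (Gm m) m (R m))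
    (m : ℕ) (x y : V) :
    Gm (m + 1) x y / piw G y - Gm m x y / piw G y
      = ∑ ξ ∈ (F.layer_finite (m + 1)).toFinset,
          hadK F P R (m + 1) x ξ * hadK F P R (m + 1) y ξ := by
  classical
  set L : Finset V := (F.layer_finite (m + 1)).toFinset with hLdef
  have hmemL : ∀ z : V, z ∈ L ↔ z ∈ F.layer (m + 1) := by
    intro z; simp [hLdef, Set.Finite.mem_toFinset]
  -- LHS chain
  have step1 : Gm (m + 1) x y / piw G y - Gm m x y / piw G y
      = ∑ η ∈ L, P (m + 1) x η * (Gm (m + 1) η y / piw G y) := by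
    rw [div_sub_div_same, green_increment F hGm hP m x y, Finset.sum_div]
    exact Finset.sum_congr rfl (fun η _ => by rw [mul_div_assoc])
  have step2 : ∀ η ∈ L, Gm (m + 1) η y / piw G y
      = ∑ η' ∈ L, P (m + 1) y η' * (Gm (m + 1) η' η / piw G η) := by
    intro η hη
    rw [green_symm_div F (hGm (m + 1)) η y]
    have h0 : Gm m y η = 0 :=
      green_vanish (hGm m) (Or.inr (not_mem_cluster_of_layer F (Nat.lt_succ_self m)
        ((hmemL η).mp hη)))
    have := green_increment F hGm hP m y η
    rw [h0, sub_zero] at this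
    rw [this, Finset.sum_div]
    exact Finset.sum_congr rfl (fun η' _ => by rw [mul_div_assoc])
  have step3 : ∀ η ∈ L, ∀ η' ∈ L, Gm (m + 1) η' η / piw G η
      = ∑ σ ∈ L, R (m + 1) η' σ * R (m + 1) σ η := by
    intro η hη η' hη'
    have h := (hR (m + 1)).2.2.2 η' ((hmemL η').mp hη') η ((hmemL η).mp hη)
    rw [finsum_mem_eq_finite_toFinset_sum _ (F.layer_finite (m + 1))] at h
    exact h.symm
  rw [step1, Finset.sum_congr rfl (fun η hη => by
    rw [step2 η hη, Finset.mul_sum,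
      Finset.sum_congr rfl (fun η' hη' => by
        rw [step3 η hη η' hη', Finset.mul_sum, Finset.mul_sum])])]
  -- now LHS = ∑_η ∑_η' ∑_σ P x η * (P y η' * (R η' σ * R σ η))
  -- RHS
  have hRs : ∀ σ ∈ L, ∀ η ∈ L, R (m + 1) σ η = R (m + 1) η σ := by
    intro σ hσ η hη
    exact (hR (m + 1)).1 σ η ((hmemL σ).mp hσ) ((hmemL η).mp hη)
  have hterm : ∀ ξ ∈ L, hadK F P R (m + 1) x ξ * hadK F P R (m + 1) y ξ
      = ∑ η ∈ L, ∑ η' ∈ L,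
          (P (m + 1) x η * R (m + 1) η ξ) * (P (m + 1) y η' * R (m + 1) η' ξ) := by
    intro ξ _
    rw [hadK_eq, hadK_eq, Finset.sum_mul]
    exact Finset.sum_congr rfl (fun η _ => Finset.mul_sum _ _ _)
  conv_rhs => rw [Finset.sum_congr rfl hterm]
  conv_rhs => rw [Finset.sum_comm]
  refine Finset.sum_congr rfl (fun η hη => ?_)
  conv_rhs => rw [Finset.sum_comm]
  refine Finset.sum_congr rfl (fun η' hη' => ?_)
  refine Finset.sum_congr rfl (fun σ hσ => ?_)
  rw [hRs σ hσ η hη]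
  ring

lemma base_case (F : DiscreteFoliation G)
    {Gm : ℕ → V → V → ℝ} (hGm : ∀ m, IsGreen G (cluster F m) (Gm m))
    {P : ℕ → V → V → ℝ} (hP : ∀ m, IsPoisson G (cluster F m) (F.layer m) (P m))
    {R : ℕ → V → V → ℝ} (hR : ∀ m, IsSqrtBoundaryGreen F (Gm m) m (R m))
    (x y : V) :
    Gm 0 x y / piw G y
      = ∑ ξ ∈ (F.layer_finite 0).toFinset, hadK F P R 0 x ξ * hadK F P R 0 y ξ := by
  classical
  set L : Finset V := (F.layer_finite 0).toFinset with hLdef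
  have hmemL : ∀ z : V, z ∈ L ↔ z ∈ F.layer 0 := by
    intro z; simp [hLdef, Set.Finite.mem_toFinset]
  have hK : ∀ z ξ : V, hadK F P R 0 z ξ = if z ∈ F.layer 0 then R 0 z ξ else 0 := by
    intro z ξ
    rw [hadK_eq]
    by_cases hz : z ∈ F.layer 0
    · rw [if_pos hz]
      have hcong : ∀ η ∈ L, P 0 z η * R 0 η ξ = if z = η then R 0 η ξ else 0 := by
        intro η hη
        rw [(hP 0 η ((hmemL η).mp hη)).2.1 z hz]
        split
        · ring
        · ring
      rw [Finset.sum_congr rfl hcong, Finset.sum_ite_eq _ z (fun η => R 0 η ξ),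
        if_pos ((hmemL z).mpr hz)]
    · rw [if_neg hz]
      refine Finset.sum_eq_zero (fun η hη => ?_)
      rw [(hP 0 η ((hmemL η).mp hη)).2.2 z (by rwa [cluster_zero F]), zero_mul]
  by_cases hx : x ∈ F.layer 0
  · by_cases hy : y ∈ F.layer 0
    · have h := (hR 0).2.2.2 x hx y hy
      rw [finsum_mem_eq_finite_toFinset_sum _ (F.layer_finite 0)] at h
      rw [← h]
      refine Finset.sum_congr rfl (fun σ hσ => ?_)
      rw [hK x σ, hK y σ, if_pos hx, if_pos hy,
        (hR 0).1 σ y ((hmemL σ).mp hσ) hy]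
    · rw [green_vanish (hGm 0) (Or.inr (by rwa [cluster_zero F])), zero_div]
      exact (Finset.sum_eq_zero (fun ξ _ => by rw [hK y ξ, if_neg hy, mul_zero])).symm
  · rw [green_vanish (hGm 0) (Or.inl (by rwa [cluster_zero F])), zero_div]
    exact (Finset.sum_eq_zero (fun ξ _ => by rw [hK x ξ, if_neg hx, zero_mul])).symm

end Aux4

/-- discrete Hadamard variational formula:
`G_n(x,y)/π(y) = Σ_{ξ∈V(Γ_n)} K_{t(ξ)}(x,ξ) K_{t(ξ)}(y,ξ)`. -/
theorem discrete_hadamard_formula (G : WeightedGraph V) (F : DiscreteFoliation G)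
    (Gm : ℕ → V → V → ℝ) (hGm : ∀ m, IsGreen G (cluster F m) (Gm m))
    (P : ℕ → V → V → ℝ) (hP : ∀ m, IsPoisson G (cluster F m) (F.layer m) (P m))
    (R : ℕ → V → V → ℝ) (hR : ∀ m, IsSqrtBoundaryGreen F (Gm m) m (R m))
    (t : V → ℕ) (ht : ∀ ξ, ξ ∈ F.layer (t ξ))
    (n : ℕ) (x y : V) :
    Gm n x y / piw G y =
      ∑ᶠ ξ ∈ cluster F n, hadK F P R (t ξ) x ξ * hadK F P R (t ξ) y ξ := by
  classical
  induction n with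
  | zero =>
    rw [finsum_mem_eq_finite_toFinset_sum _ (cluster_finite F 0)]
    have hset : (cluster_finite F 0).toFinset = (F.layer_finite 0).toFinset := by
      ext z; simp [Set.Finite.mem_toFinset, cluster_zero F]
    rw [hset, base_case F hGm hP hR x y]
    exact Finset.sum_congr rfl (fun ξ hξ => by
      rw [t_eq F ht (show ξ ∈ F.layer 0 by
        simpa [Set.Finite.mem_toFinset] using hξ)])
  | succ n ih =>
    rw [finsum_mem_eq_finite_toFinset_sum _ (cluster_finite F (n + 1))]
    have hset : (cluster_finite F (n + 1)).toFinset
        = (cluster_finite F n).toFinset ∪ (F.layer_finite (n + 1)).toFinset := by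
      ext z
      simp [Set.Finite.mem_toFinset, cluster_succ F n]
    have hdisj : Disjoint (cluster_finite F n).toFinset (F.layer_finite (n + 1)).toFinset := by
      rw [Finset.disjoint_left]
      intro a ha hb
      exact not_mem_cluster_of_layer F (Nat.lt_succ_self n)
        (show a ∈ F.layer (n + 1) by simpa [Set.Finite.mem_toFinset] using hb)
        (show a ∈ cluster F n by simpa [Set.Finite.mem_toFinset] using ha)
    rw [hset, Finset.sum_union hdisj]
    rw [finsum_mem_eq_finite_toFinset_sum _ (cluster_finite F n)] at ih
    rw [← ih]
    have hlayer : ∑ ξ ∈ (F.layer_finite (n + 1)).toFinset,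
          hadK F P R (t ξ) x ξ * hadK F P R (t ξ) y ξ
        = ∑ ξ ∈ (F.layer_finite (n + 1)).toFinset,
          hadK F P R (n + 1) x ξ * hadK F P R (n + 1) y ξ :=
      Finset.sum_congr rfl (fun ξ hξ => by
        rw [t_eq F ht (show ξ ∈ F.layer (n + 1) by
          simpa [Set.Finite.mem_toFinset] using hξ)])
    rw [hlayer, ← increment F hGm hP hR n x y]
    ring
end
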